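/- arXiv:1202.6260 — 3 statements merged into one kernel-verified Lean document; each statement's English description precedes it below -/
import Mathlib

section
/- Fix integers t ≥ 1, a ≥ 2, q ≥ 2, and p a positive multiple of a^t, and suppose n ≥ p + p(q−1)·Σ_{j=1}^{t} q^{t−j}/a^{t−j}. Then there exists a set K of q^t vectors in {0,1}^n, each of Hamming weight exactly p, together with a rooted q-ary tree structure of depth t on K such that: for each i ∈ {1,...,t}, any two vectors whose deepest common ancestor is at depth t−i have Hamming distance exactly 2p/a^{t−i}. -/
open Finset
namespace Stmt8Aux
def Qf (t a m k : ℕ) : ℕ := if k < t then m * a ^ (t - k) else 0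
def cf (t a m j : ℕ) : ℕ := Qf t a m j - Qf t a m (j + 1)
lemma Qf_anti {t a m : ℕ} (ha : 1 ≤ a) : ∀ {i j : ℕ}, i ≤ j → Qf t a m j ≤ Qf t a m i := by
  intro i j hij
  unfold Qf
  by_cases hj : j < t
  · have hi : i < t := lt_of_le_of_lt hij hj
    simp only [hi, hj, if_pos]
    exact Nat.mul_le_mul_left _ (Nat.pow_le_pow_right ha (Nat.sub_le_sub_left hij t))
  · simp [hj]
lemma Qf_succ_le {t a m : ℕ} (ha : 1 ≤ a) (j : ℕ) : Qf t a m (j+1) ≤ Qf t a m j :=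
  Qf_anti ha (Nat.le_succ j)
lemma Qf_t {t a m : ℕ} : Qf t a m t = 0 := by simp [Qf]
lemma Qf_zero {t a m : ℕ} (ht : 1 ≤ t) : Qf t a m 0 = m * a ^ t := by
  have : 0 < t := ht
  simp [Qf, this]
lemma sum_cf {t a m : ℕ} (ha : 1 ≤ a) (k : ℕ) :
    ∑ j ∈ range k, cf t a m j = Qf t a m 0 - Qf t a m k := by
  induction k with
  | zero => simp
  | succ k ih =>
    rw [Finset.sum_range_succ, ih]
    have h1 := Qf_succ_le (t := t) (m := m) ha k
    have h2 := Qf_anti (t := t) (m := m) ha (Nat.zero_le k)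
    have h3 := Qf_anti (t := t) (m := m) ha (Nat.zero_le (k+1))
    unfold cf; omega

def pre {t q : ℕ} (j : Fin t) (s : Fin t → Fin q) : Fin (j.1 + 1) → Fin q :=
  fun i => s (Fin.castLE j.isLt i)

abbrev B (t a m : ℕ) : Type := Σ j : Fin t, Fin (cf t a m j.1)
abbrev A (t a q m : ℕ) : Type := Σ j : Fin t, ((Fin (j.1 + 1) → Fin q) × Fin (cf t a m j.1))

def embS {t a q m : ℕ} (s : Fin t → Fin q) : B t a m → A t a q m :=
  fun b => ⟨b.1, (pre b.1 s, b.2)⟩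

lemma embS_inj {t a q m : ℕ} (s : Fin t → Fin q) :
    Function.Injective (embS (a := a) (q := q) (m := m) s) := by
  rintro ⟨j, r⟩ ⟨j', r'⟩ h
  have h1 : j = j' := congrArg Sigma.fst h
  subst h1
  have h2 : ((pre j s, r) : (Fin (j.1+1) → Fin q) × Fin (cf t a m j.1)) = (pre j s, r') :=
    eq_of_heq (Sigma.ext_iff.mp h).2
  have : r = r' := congrArg Prod.snd h2
  rw [this]

lemma embS_eq {t a q m : ℕ} {s s' : Fin t → Fin q} {b b' : B t a m}
    (h : embS (q := q) s b = embS (q := q) s' b') :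
    b = b' ∧ pre b.1 s = pre b.1 s' := by
  obtain ⟨j, r⟩ := b; obtain ⟨j', r'⟩ := b'
  have h1 : j = j' := congrArg Sigma.fst h
  subst h1
  have h2 : ((pre j s, r) : (Fin (j.1+1) → Fin q) × Fin (cf t a m j.1)) = (pre j s', r') :=
    eq_of_heq (Sigma.ext_iff.mp h).2
  have hB : r = r' := congrArg Prod.snd h2
  have hA : pre j s = pre j s' := congrArg Prod.fst h2
  exact ⟨by rw [hB], hA⟩

lemma N_le {t a q m p n : ℕ} (ht : 1 ≤ t) (ha : 2 ≤ a) (hp : p = m * a ^ t)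
    (hn : (p : ℝ) + p * (q - 1) * ∑ j ∈ Finset.Icc 1 t, (q : ℝ) ^ (t - j) / (a : ℝ) ^ (t - j)
      ≤ (n : ℝ)) :
    ∑ j ∈ range t, q ^ (j + 1) * cf t a m j ≤ n := by
  have ha1 : 1 ≤ a := le_trans one_le_two ha
  have ha0 : (0:ℝ) < a := by exact_mod_cast Nat.lt_of_lt_of_le Nat.zero_lt_two ha
  have ha0' : (a:ℝ) ≠ 0 := ne_of_gt ha0
  set x : ℝ := (q:ℝ)/a with hx
  have hG : ∑ j ∈ Finset.Icc 1 t, (q : ℝ) ^ (t - j) / (a : ℝ) ^ (t - j)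
      = ∑ i ∈ range t, x ^ i := by
    rw [← Finset.Ico_add_one_right_eq_Icc, Finset.sum_Ico_eq_sum_range]
    have h2 : ∀ i, ((q:ℝ)^(t - (1 + i)) / (a:ℝ)^(t - (1 + i)))
        = ((q:ℝ)^(t - 1 - i) / (a:ℝ)^(t - 1 - i)) := by
      intro i; congr 2 <;> omega
    simp only [Nat.succ_sub_one, Nat.add_sub_cancel, h2]
    rw [Finset.sum_range_reflect (fun i => (q:ℝ)^i/(a:ℝ)^i) t]
    exact Finset.sum_congr rfl fun i _ => (div_pow _ _ _).symm
  have hterm : ∀ k < t, (q:ℝ) ^ k * ((Qf t a m k : ℕ) : ℝ) = (p:ℝ) * x ^ k := by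
    intro k hk
    have hQ : Qf t a m k = m * a ^ (t - k) := by simp [Qf, hk]
    have hpow : (a:ℝ) ^ (t - k) * (a:ℝ) ^ k = (a:ℝ) ^ t := by
      rw [← pow_add]; congr 1; omega
    rw [hQ, hx, div_pow, hp]
    field_simp
    push_cast
    linear_combination ((q:ℝ)^k * (m:ℝ)) * hpow
  have hS1 : ∑ j ∈ range t, (q:ℝ) ^ (j + 1) * ((Qf t a m j : ℕ) : ℝ)
      = (p:ℝ) * q * ∑ i ∈ range t, x ^ i := by
    rw [Finset.mul_sum]
    refine Finset.sum_congr rfl fun j hj => ?_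
    have h := hterm j (mem_range.mp hj)
    calc (q:ℝ) ^ (j + 1) * ((Qf t a m j : ℕ) : ℝ)
        = (q:ℝ) * ((q:ℝ) ^ j * ((Qf t a m j : ℕ) : ℝ)) := by ring
      _ = (p:ℝ) * (q:ℝ) * x ^ j := by rw [h]; ring
  have hS2 : ∑ j ∈ range t, (q:ℝ) ^ (j + 1) * ((Qf t a m (j+1) : ℕ) : ℝ)
      = (p:ℝ) * ((∑ i ∈ range t, x ^ i) - 1) := by
    obtain ⟨t', rfl⟩ : ∃ t', t = t' + 1 := ⟨t - 1, by omega⟩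
    rw [Finset.sum_range_succ, Qf_t, Finset.sum_range_succ' (fun i => x ^ i) t']
    simp only [Nat.cast_zero, mul_zero, add_zero, pow_zero]
    rw [Finset.sum_congr rfl (fun j hj => hterm (j+1) (by have := mem_range.mp hj; omega))]
    rw [← Finset.mul_sum]
    ring
  have hcast : ((∑ j ∈ range t, q ^ (j + 1) * cf t a m j : ℕ) : ℝ)
      = (p:ℝ) + (p:ℝ) * ((q:ℝ) - 1) * ∑ i ∈ range t, x ^ i := by
    rw [Nat.cast_sum]
    have : ∀ j ∈ range t, ((q ^ (j + 1) * cf t a m j : ℕ) : ℝ)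
        = (q:ℝ) ^ (j + 1) * ((Qf t a m j : ℕ) : ℝ)
          - (q:ℝ) ^ (j + 1) * ((Qf t a m (j+1) : ℕ) : ℝ) := by
      intro j _
      rw [Nat.cast_mul, Nat.cast_pow, cf, Nat.cast_sub (Qf_succ_le ha1 j)]
      ring
    rw [Finset.sum_congr rfl this, Finset.sum_sub_distrib, hS1, hS2]
    ring
  have : ((∑ j ∈ range t, q ^ (j + 1) * cf t a m j : ℕ) : ℝ) ≤ (n:ℝ) := by
    rw [hcast]; rw [hG] at hn; exact hn
  exact_mod_cast this

lemma card_filter_lt {t a m : ℕ} (ha : 1 ≤ a) (k : ℕ) (hk : k ≤ t) :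
    ((univ : Finset (B t a m)).filter fun b => (b.1 : ℕ) < k).card
      = Qf t a m 0 - Qf t a m k := by
  rw [← sum_cf ha k]
  have hsig : ((univ : Finset (B t a m)).filter fun b => (b.1 : ℕ) < k)
      = ((univ : Finset (Fin t)).filter fun j : Fin t => (j : ℕ) < k).sigma
          (fun j => (univ : Finset (Fin (cf t a m j.1)))) := by
    ext ⟨j, r⟩
    simp [Finset.mem_sigma]
  rw [hsig, Finset.card_sigma]
  simp only [Finset.card_univ, Fintype.card_fin]
  rw [Finset.sum_filter]
  calc ∑ j : Fin t, (if (j : ℕ) < k then cf t a m (j : ℕ) else 0)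
      = ∑ j ∈ range t, (if j < k then cf t a m j else 0) :=
        Fin.sum_univ_eq_sum_range (fun j => if j < k then cf t a m j else 0) t
    _ = ∑ j ∈ range k, (if j < k then cf t a m j else 0) :=
        (Finset.sum_subset (Finset.range_subset_range.mpr hk)
          (fun x _ hx => if_neg (by simpa using hx))).symm
    _ = ∑ j ∈ range k, cf t a m j :=
        Finset.sum_congr rfl fun j hj => if_pos (Finset.mem_range.mp hj)

end Stmt8Aux


lemma hammingDist_eq_card {N : ℕ} (x y : Fin N → Bool) :
    hammingDist x y = (Finset.univ.filter fun i => x i ≠ y i).card := rfl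

def wt {n : ℕ} (x : Fin n → Bool) : ℕ := (Finset.univ.filter fun i => x i = true).card

open Stmt8Aux Finset in
theorem stmt_8 {t a q p n : ℕ} (ht : 1 ≤ t) (ha : 2 ≤ a) (hq : 2 ≤ q)
    (hp : 0 < p) (hdvd : a ^ t ∣ p)
    (hn : (p : ℝ) + p * (q - 1) * ∑ j ∈ Finset.Icc 1 t, (q : ℝ) ^ (t - j) / (a : ℝ) ^ (t - j)
      ≤ (n : ℝ)) :
    ∃ v : (Fin t → Fin q) → (Fin n → Bool),
      Function.Injective v ∧
      (∀ s, wt (v s) = p) ∧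
      (∀ s s', s ≠ s' → ∀ k : ℕ,
        (∀ j : Fin t, (j : ℕ) < k → s j = s' j) →
        (∃ j : Fin t, (j : ℕ) = k ∧ s j ≠ s' j) →
        a ^ k * hammingDist (v s) (v s') = 2 * p) := by
  classical
  obtain ⟨m, hm⟩ := hdvd
  have hm' : p = m * a ^ t := by rw [hm]; ring
  have ha1 : 1 ≤ a := by omega
  have hmpos : 0 < m := by
    rcases Nat.eq_zero_or_pos m with h | h
    · subst h; simp at hm'; omega
    · exact h
  have hcardA : Fintype.card (A t a q m) = ∑ j ∈ Finset.range t, q ^ (j + 1) * cf t a m j := by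
    rw [Fintype.card_sigma]
    calc ∑ j : Fin t, Fintype.card ((Fin (j.1 + 1) → Fin q) × Fin (cf t a m j.1))
        = ∑ j : Fin t, q ^ ((j : ℕ) + 1) * cf t a m (j : ℕ) := by
          refine Finset.sum_congr rfl fun j _ => ?_
          simp [Fintype.card_fun]
      _ = _ := Fin.sum_univ_eq_sum_range (fun j => q ^ (j + 1) * cf t a m j) t
  have hcardB : Fintype.card (B t a m) = p := by
    rw [Fintype.card_sigma]
    calc ∑ j : Fin t, Fintype.card (Fin (cf t a m j.1))
        = ∑ j : Fin t, cf t a m (j : ℕ) := by simp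
      _ = ∑ j ∈ Finset.range t, cf t a m j := Fin.sum_univ_eq_sum_range _ t
      _ = Qf t a m 0 - Qf t a m t := sum_cf ha1 t
      _ = p := by rw [Qf_t, Qf_zero ht, Nat.sub_zero, ← hm']
  have hle : Fintype.card (A t a q m) ≤ Fintype.card (Fin n) := by
    rw [Fintype.card_fin, hcardA]
    exact N_le ht ha hm' hn
  obtain ⟨e⟩ := Function.Embedding.nonempty_of_card_le hle
  set T : (Fin t → Fin q) → Finset (Fin n) :=
    fun s => (((univ : Finset (B t a m)).image (embS s)).map e) with hT
  set v : (Fin t → Fin q) → Fin n → Bool := fun s i => decide (i ∈ T s) with hv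
  have hTcard : ∀ s, (T s).card = p := by
    intro s
    rw [hT]
    simp only [Finset.card_map]
    rw [Finset.card_image_of_injective _ (embS_inj s), Finset.card_univ, hcardB]
  have key : ∀ s s' (k : ℕ) (hk : k < t), (∀ j : Fin t, (j : ℕ) < k → s j = s' j) →
      s ⟨k, hk⟩ ≠ s' ⟨k, hk⟩ → hammingDist (v s) (v s') = 2 * Qf t a m k := by
    intro s s' k hk hagree hne
    have hinter : ((univ : Finset (B t a m)).image (embS s)) ∩ ((univ : Finset (B t a m)).image (embS s'))
        = ((univ : Finset (B t a m)).filter fun b : B t a m => (b.1 : ℕ) < k).image (embS s) := by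
      ext x
      simp only [Finset.mem_inter, Finset.mem_image, Finset.mem_filter, Finset.mem_univ,
        true_and]
      constructor
      · rintro ⟨⟨b, rfl⟩, ⟨b', hb'⟩⟩
        obtain ⟨rfl, hpre⟩ := embS_eq hb'
        refine ⟨b', ?_, rfl⟩
        by_contra hbk
        push_neg at hbk
        have hkb : k < b'.1.1 + 1 := by omega
        have h2 := congrFun hpre ⟨k, hkb⟩
        simp only [pre] at h2
        have h3 : (Fin.castLE (b'.1.isLt) (⟨k, hkb⟩ : Fin (b'.1.1 + 1))) = ⟨k, hk⟩ := by
          apply Fin.ext; simp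
        rw [h3] at h2
        exact hne h2.symm
      · rintro ⟨b, hbk, rfl⟩
        have hpre : pre b.1 s' = pre b.1 s := by
          funext i
          have hi : ((Fin.castLE b.1.isLt i : Fin t) : ℕ) < k := by
            have h1 : (i : ℕ) < b.1.1 + 1 := i.isLt
            simp only [Fin.coe_castLE]
            omega
          exact (hagree _ hi).symm
        exact ⟨⟨b, rfl⟩, ⟨b, by simp [embS, hpre]⟩⟩
    have hcapT : (T s ∩ T s').card = p - Qf t a m k := by
      rw [hT]
      simp only []
      rw [← Finset.map_inter, Finset.card_map, hinter,
        Finset.card_image_of_injective _ (embS_inj s),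
        card_filter_lt ha1 k (le_of_lt hk), Qf_zero ht, ← hm']
    have hQp : Qf t a m k ≤ p := by
      have h := Qf_anti (t := t) (m := m) (a := a) ha1 (Nat.zero_le k)
      rw [Qf_zero ht, ← hm'] at h
      exact h
    have hfil : (univ.filter fun i => v s i ≠ v s' i) = symmDiff (T s) (T s') := by
      ext i
      simp only [Finset.mem_filter, Finset.mem_univ, true_and, hv, Finset.mem_symmDiff,
        ne_eq, decide_eq_decide]
      tauto
    rw [hammingDist_eq_card, hfil, symmDiff_def, Finset.sup_eq_union,
      Finset.card_union_of_disjoint (disjoint_sdiff_sdiff)]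
    have h1 := Finset.card_sdiff_add_card_inter (T s) (T s')
    have h2 := Finset.card_sdiff_add_card_inter (T s') (T s)
    rw [Finset.inter_comm] at h2
    have hTs := hTcard s
    have hTs' := hTcard s'
    omega
  refine ⟨v, ?_, ?_, ?_⟩
  · intro s s' hvv
    by_contra hne
    have hFne : ((univ : Finset (Fin t)).filter fun j : Fin t => s j ≠ s' j).Nonempty := by
      rcases Function.ne_iff.mp hne with ⟨j, hj⟩
      exact ⟨j, Finset.mem_filter.mpr ⟨Finset.mem_univ _, hj⟩⟩
    set j0 := ((univ : Finset (Fin t)).filter fun j : Fin t => s j ≠ s' j).min' hFne with hj0def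
    have hj0mem := Finset.min'_mem _ hFne
    have hj0 : s j0 ≠ s' j0 := (Finset.mem_filter.mp hj0mem).2
    have hagree : ∀ j : Fin t, (j : ℕ) < (j0 : ℕ) → s j = s' j := by
      intro j hj
      by_contra hjj
      have hle' : j0 ≤ j := Finset.min'_le _ j (Finset.mem_filter.mpr ⟨Finset.mem_univ j, hjj⟩)
      have : (j0 : ℕ) ≤ (j : ℕ) := hle'
      omega
    have hk : (j0 : ℕ) < t := j0.isLt
    have hj0' : s ⟨(j0 : ℕ), hk⟩ ≠ s' ⟨(j0 : ℕ), hk⟩ := by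
      have heq : (⟨(j0 : ℕ), hk⟩ : Fin t) = j0 := Fin.ext rfl
      rw [heq]; exact hj0
    have hd := key s s' (j0 : ℕ) hk hagree hj0'
    rw [hvv, hammingDist_self] at hd
    have hQpos : 0 < Qf t a m (j0 : ℕ) := by
      have : ((j0 : ℕ) < t) = True := eq_true hk
      simp only [Qf, hk, if_pos]
      exact Nat.mul_pos hmpos (Nat.pow_pos (by omega))
    omega
  · intro s
    show (Finset.univ.filter fun i => v s i = true).card = p
    have hfe : (Finset.univ.filter fun i => v s i = true) = T s := by
      ext i
      simp [hv]
    rw [hfe, hTcard s]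
  · intro s s' _ k hagree hex
    obtain ⟨j, hjk, hjne⟩ := hex
    have hk : k < t := hjk ▸ j.isLt
    have hj : j = ⟨k, hk⟩ := Fin.ext hjk
    rw [hj] at hjne
    rw [key s s' k hk hagree hjne]
    have hQ : Qf t a m k = m * a ^ (t - k) := by simp [Qf, hk]
    rw [hQ, hm']
    calc a ^ k * (2 * (m * a ^ (t - k))) = 2 * (m * (a ^ (t - k) * a ^ k)) := by ring
      _ = 2 * (m * a ^ t) := by rw [pow_sub_mul_pow a (le_of_lt hk)]
end

section
/- Let q ≥ 2, a > 1, p > 0 be such that the recursive hierarchy property holds: K is a C_t-set, where a C_0-set is a singleton and a C_i-set of size q^i partitions into q C_{i−1}-sets with distance exactly 2p/a^{t−i} between different parts and maximum distance 2p/a^{t−i} overall. Then every subset K' ⊆ K with |K'| > q satisfies dr(K') ≥ a. -/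
/-!
Split a subset `K'` of a `C_{i+1}`-set with more than `q` points along the `q` parts. By
pigeonhole two distinct points `u, v` of `K'` lie in one part, a `C_i`-set, so
`ρ(u, v) ≤ 2p/a^{t-i}`. If `K'` stays inside that part we recurse; otherwise some point of `K'`
lies in another part, at distance exactly `2p/a^{t-i-1} = a · 2p/a^{t-i}` from `u`, which
forces `dr(K') ≥ a`.
-/

noncomputable def dr {n : ℕ} (L : Finset (Fin n → Bool)) : ℝ :=
  ((sSup {d : ℕ | ∃ x ∈ L, ∃ y ∈ L, hammingDist x y = d} : ℕ) : ℝ) /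
  ((sInf {d : ℕ | ∃ x ∈ L, ∃ y ∈ L, x ≠ y ∧ hammingDist x y = d} : ℕ) : ℝ)

/-- `IsCSet q a p t i L` : `L` is a `C_i`-set (within a hierarchy of depth `t`). -/
def IsCSet {n : ℕ} (q : ℕ) (a p : ℝ) (t : ℕ) : ℕ → Finset (Fin n → Bool) → Prop
  | 0, L => ∃ x, L = {x}
  | (i + 1), L =>
      L.card = q ^ (i + 1) ∧
      (∀ x ∈ L, ∀ y ∈ L, (hammingDist x y : ℝ) ≤ 2 * p / a ^ (t - (i + 1))) ∧
      (∃ x ∈ L, ∃ y ∈ L, (hammingDist x y : ℝ) = 2 * p / a ^ (t - (i + 1))) ∧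
      ∃ f : Fin q → Finset (Fin n → Bool),
        (∀ r s, r ≠ s → Disjoint (f r) (f s)) ∧
        Finset.univ.biUnion f = L ∧
        (∀ r, IsCSet q a p t i (f r)) ∧
        (∀ r s, r ≠ s → ∀ x ∈ f r, ∀ y ∈ f s,
          (hammingDist x y : ℝ) = 2 * p / a ^ (t - (i + 1)))

lemma le_dr_of_mul_le {n : ℕ} {L : Finset (Fin n → Bool)} {c : ℝ} (hc : 0 ≤ c)
    {x y u v : Fin n → Bool} (hx : x ∈ L) (hy : y ∈ L) (hu : u ∈ L) (hv : v ∈ L) (huv : u ≠ v)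
    (h : c * hammingDist u v ≤ hammingDist x y) : c ≤ dr L := by
  set S := {d : ℕ | ∃ x ∈ L, ∃ y ∈ L, hammingDist x y = d}
  set S' := {d : ℕ | ∃ x ∈ L, ∃ y ∈ L, x ≠ y ∧ hammingDist x y = d}
  have hS : BddAbove S := ⟨n, by
    rintro d ⟨x, -, y, -, rfl⟩
    simpa using hammingDist_le_card_fintype (x := x) (y := y)⟩
  have hsup : hammingDist x y ≤ sSup S := le_csSup hS ⟨x, hx, y, hy, rfl⟩
  have hinf : sInf S' ≤ hammingDist u v := Nat.sInf_le ⟨u, hu, v, hv, huv, rfl⟩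
  have hinf_pos : 0 < sInf S' := by
    obtain ⟨x', -, y', -, hxy', hd⟩ := Nat.sInf_mem (s := S') ⟨_, u, hu, v, hv, huv, rfl⟩
    exact hd ▸ hammingDist_pos.mpr hxy'
  rw [dr, le_div_iff₀ (by exact_mod_cast hinf_pos)]
  calc c * ((sInf S' : ℕ) : ℝ) ≤ c * hammingDist u v := by gcongr
    _ ≤ hammingDist x y := h
    _ ≤ sSup S := by exact_mod_cast hsup

namespace IsCSet

variable {n q t : ℕ} {a p : ℝ}

lemma dist_le {i : ℕ} {L : Finset (Fin n → Bool)} (hL : IsCSet q a p t i L)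
    {u v : Fin n → Bool} (hu : u ∈ L) (hv : v ∈ L) (huv : u ≠ v) :
    (hammingDist u v : ℝ) ≤ 2 * p / a ^ (t - i) := by
  cases i with
  | zero =>
    obtain ⟨x, rfl⟩ := hL
    exact absurd ((Finset.mem_singleton.mp hu).trans (Finset.mem_singleton.mp hv).symm) huv
  | succ i => exact hL.2.1 u hu v hv

lemma le_dr (hq : 0 < q) (ha : 0 < a) {i : ℕ} (hi : i ≤ t) {L : Finset (Fin n → Bool)}
    (hL : IsCSet q a p t i L) {K' : Finset (Fin n → Bool)} (hK' : K' ⊆ L) (hcard : q < K'.card) :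
    a ≤ dr K' := by
  induction i generalizing L K' with
  | zero =>
    obtain ⟨x, rfl⟩ := hL
    have := Finset.card_le_card hK'
    rw [Finset.card_singleton] at this
    omega
  | succ i ih =>
    obtain ⟨-, -, -, f, -, hunion, hparts, hcross⟩ := hL
    have hpart : ∀ x ∈ K', ∃ r, x ∈ f r := fun x hx => by
      simpa [← hunion] using hK' hx
    choose part hmem using fun x : K' => hpart x x.2
    obtain ⟨u, v, huv, hpuv⟩ := Fintype.exists_ne_map_eq_of_card_lt part (by simpa using hcard)
    have hu := hmem u
    have hv := hmem v
    rw [hpuv] at hu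
    set r := part v
    by_cases hsub : K' ⊆ f r
    · exact ih (by omega) (hparts r) hsub hcard
    obtain ⟨y, hy, hyr⟩ := Finset.not_subset.mp hsub
    obtain ⟨s, hys⟩ := hpart y hy
    have hrs : r ≠ s := fun h => hyr (h ▸ hys)
    -- This is where `i ≤ t` matters: beyond `t`, truncated subtraction freezes the scale at `2p`.
    have hscale : a * (2 * p / a ^ (t - i)) = 2 * p / a ^ (t - (i + 1)) := by
      rw [show t - i = t - (i + 1) + 1 by omega, pow_succ]
      field_simp
    refine le_dr_of_mul_le ha.le u.2 hy u.2 v.2 (Subtype.coe_ne_coe.mpr huv) ?_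
    calc a * hammingDist (u : Fin n → Bool) v
        ≤ a * (2 * p / a ^ (t - i)) := by
          gcongr; exact (hparts r).dist_le hu hv (Subtype.coe_ne_coe.mpr huv)
      _ = hammingDist (u : Fin n → Bool) y := by rw [hscale, hcross r s hrs u hu y hys]

end IsCSet

theorem stmt_9_general {n q t : ℕ} (a p : ℝ) (hq : 2 ≤ q) (ha : 1 < a)
    (K : Finset (Fin n → Bool)) (hK : IsCSet q a p t t K) :
    ∀ K' ⊆ K, q < K'.card → a ≤ dr K' :=
  fun _ hK' hcard => hK.le_dr (by omega) (by linarith) le_rfl hK' hcard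

theorem stmt_9 {n q t : ℕ} (a p : ℝ) (hq : 2 ≤ q) (ha : 1 < a) (hp : 0 < p)
    (K : Finset (Fin n → Bool)) (hK : IsCSet q a p t t K) :
    ∀ K' ⊆ K, q < K'.card → a ≤ dr K' :=
  stmt_9_general a p hq ha K hK
end

section
/- For every real α > 0, C ≥ 1, and λ > 1, there exist positive integers p, n and a set K of at least λ^p vectors in {0,1}^n, each of Hamming weight exactly p, such that every subset K' ⊆ K with |K'| ≥ |K|^α satisfies dr(K') > C. -/
/-!
Words of length `L` over an alphabet of size `m` are the leaves of the `m`-ary tree of depth `L`.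
Encode a word by the indicator of its prefixes, the prefix of length `j + 1` being repeated
`2 ^ (L - 1 - j)` times. Every codeword has weight `2 ^ L - 1`, and the distance of two codewords
is governed by the first position `i` where the words differ: it is at least `2 ^ (L - i)`, and
below `2 ^ (L - s + 1)` when the words agree on the first `s` positions.

Let `T` be a set of more than `m ^ t` words and `i` the first position where `T` is not constant.
Some pair of `T` differs at `i`, while pigeonhole on positions `i, …, i + t - 1` gives two distinct
words of `T` agreeing up to `i + t`. Hence `dr > 2 ^ (t - 1) ≥ C`. Taking `t < α L` and
`m ≥ λ ^ p` with `p = 2 ^ L - 1`, every `K' ⊆ K` with `|K'| ≥ |K| ^ α = m ^ (α L)` has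
more than `m ^ t` elements.
-/

open Finset

section Hamming

variable {ι γ : Type*} [Fintype ι] [DecidableEq γ]

theorem hammingDist_eq_sum (x y : ι → γ) :
    hammingDist x y = ∑ i, if x i ≠ y i then 1 else 0 :=
  card_filter _ _

theorem hammingDist_comp_equiv {κ : Type*} [Fintype κ] (e : κ ≃ ι) (x y : ι → γ) :
    hammingDist (x ∘ e) (y ∘ e) = hammingDist x y :=
  card_equiv e (by simp)

theorem hammingDist_sigma {β : ι → Type*} [∀ i, Fintype (β i)] (x y : (Σ i, β i) → γ) :
    hammingDist x y = ∑ i, hammingDist (fun b => x ⟨i, b⟩) (fun b => y ⟨i, b⟩) := by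
  simp only [hammingDist_eq_sum, Fintype.sum_sigma]

theorem hammingDist_comp_snd {α : Type*} [Fintype α] (x y : ι → γ) :
    hammingDist (x ∘ Prod.snd : α × ι → γ) (y ∘ Prod.snd) = Fintype.card α * hammingDist x y := by
  rw [hammingDist, hammingDist, ← card_univ, ← card_product]
  congr 1
  ext
  simp

theorem hammingDist_decide_eq_decide_eq (b c : ι) [DecidableEq ι] :
    hammingDist (fun a => decide (b = a)) (fun a => decide (c = a)) = if b = c then 0 else 2 := by
  split_ifs with h
  · simp [h]
  · rw [hammingDist, ← card_pair h]
    congr 1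
    ext a
    by_cases hb : b = a <;> by_cases hc : c = a <;> simp_all [eq_comm]

theorem hammingDist_decide_eq_false (b : ι) [DecidableEq ι] :
    hammingDist (fun a => decide (b = a)) (fun _ => false) = 1 := by
  rw [hammingDist, ← card_singleton b]
  congr 1
  ext a
  simp [eq_comm]

end Hamming

theorem wt_eq_hammingDist {n : ℕ} (x : Fin n → Bool) : wt x = hammingDist x (fun _ => false) := by
  simp [wt, hammingDist]

theorem lt_dr_of_mul_hammingDist_lt {n : ℕ} {L : Finset (Fin n → Bool)} {C : ℝ} (hC : 0 ≤ C)
    {x y x' y' : Fin n → Bool} (hx : x ∈ L) (hy : y ∈ L) (hx' : x' ∈ L) (hy' : y' ∈ L)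
    (hne : x' ≠ y') (h : C * hammingDist x' y' < hammingDist x y) : C < dr L := by
  set diam := sSup {d : ℕ | ∃ x ∈ L, ∃ y ∈ L, hammingDist x y = d}
  set sep := sInf {d : ℕ | ∃ x ∈ L, ∃ y ∈ L, x ≠ y ∧ hammingDist x y = d}
  have hsep_le : sep ≤ hammingDist x' y' := Nat.sInf_le ⟨x', hx', y', hy', hne, rfl⟩
  have hsep_pos : 0 < sep := by
    obtain ⟨u, -, v, -, huv, hd⟩ :=
      Nat.sInf_mem (s := {d : ℕ | ∃ x ∈ L, ∃ y ∈ L, x ≠ y ∧ hammingDist x y = d})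
        ⟨_, x', hx', y', hy', hne, rfl⟩
    exact (hammingDist_pos.mpr huv).trans_eq hd
  have hdiam : hammingDist x y ≤ diam := by
    refine le_csSup ⟨n, ?_⟩ ⟨x, hx, y, hy, rfl⟩
    rintro _ ⟨u, -, v, -, rfl⟩
    simpa using hammingDist_le_card_fintype (x := u) (y := v)
  rw [dr, lt_div_iff₀ (by exact_mod_cast hsep_pos)]
  calc C * sep ≤ C * hammingDist x' y' := by gcongr
    _ < hammingDist x y := h
    _ ≤ diam := by exact_mod_cast hdiam

section Words

variable {L m : ℕ}

theorem exists_far_pair_and_close_pair {t : ℕ} (hm : 0 < m) {T : Finset (Fin L → Fin m)}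
    (hT : m ^ t < #T) :
    ∃ i : Fin L, (∃ u ∈ T, ∃ v ∈ T, u i ≠ v i) ∧
      ∃ u ∈ T, ∃ v ∈ T, u ≠ v ∧ ∀ k : Fin L, (k : ℕ) < i + t → u k = v k := by
  obtain ⟨a, ha, b, hb, hab⟩ := one_lt_card.mp ((Nat.one_le_pow _ _ hm).trans_lt hT)
  obtain ⟨k, hk⟩ := Function.ne_iff.mp hab
  obtain ⟨i, hsplit, hmin⟩ := wellFounded_lt.has_min {i : Fin L | ∃ u ∈ T, ∃ v ∈ T, u i ≠ v i}
    ⟨k, a, ha, b, hb, hk⟩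
  refine ⟨i, hsplit, ?_⟩
  have hagree : ∀ u ∈ T, ∀ v ∈ T, ∀ k : Fin L, k < i → u k = v k := fun u hu v hv k hk =>
    by_contra fun h => hmin k ⟨u, hu, v, hv, h⟩ hk
  -- all of `T` agrees below `i`, so pigeonhole on the positions `i, …, i + t - 1` suffices
  set S : Finset (Fin L) := {k | i ≤ k ∧ (k : ℕ) < i + t}
  have hS : #S ≤ t :=
    calc #S ≤ #(Ico (i : ℕ) (i + t)) :=
          card_le_card_of_injOn Fin.val (fun k hk => by simp_all [S]) Fin.val_injective.injOn
      _ = t := by simp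
  have hcard : #(univ : Finset (S → Fin m)) < #T :=
    calc #(univ : Finset (S → Fin m)) = m ^ #S := by simp
      _ ≤ m ^ t := Nat.pow_le_pow_right hm hS
      _ < #T := hT
  obtain ⟨u, hu, v, hv, huv, hrestr⟩ := exists_ne_map_eq_of_card_lt_of_maps_to hcard
    (f := fun w (k : S) => w k) (fun _ _ => mem_coe.2 (mem_univ _))
  refine ⟨u, hu, v, hv, huv, fun k hk => ?_⟩
  rcases lt_or_ge k i with hki | hik
  · exact hagree u hu v hv k hki
  · exact congrFun hrestr ⟨k, by simp [S, hik, hk]⟩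

end Words

section TreeCode

variable {L m : ℕ}

/-- Coordinate `⟨j, r, a⟩` records whether the word has prefix `a` of length `j + 1`; the copy index
`r` weights level `j` by `2 ^ j.rev`, more than all deeper levels together. -/
abbrev TreeCoord (L m : ℕ) := Σ j : Fin L, Fin (2 ^ (j.rev : ℕ)) × (Fin (j + 1) → Fin m)

def treeCode (w : Fin L → Fin m) (σ : TreeCoord L m) : Bool :=
  decide (Fin.take (σ.1 + 1) σ.1.isLt w = σ.2.2)

theorem Fin.take_eq_take_of_lt {α : Type*} {w v : Fin L → α} {s : ℕ}
    (h : ∀ k : Fin L, (k : ℕ) < s → w k = v k)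
    {j : Fin L} (hj : (j : ℕ) < s) : Fin.take (j + 1) j.isLt w = Fin.take (j + 1) j.isLt v := by
  funext k
  simp only [Fin.take_apply]
  exact h _ (by simp; omega)

theorem Fin.take_ne_take_of_ne {α : Type*} {w v : Fin L → α} {i : Fin L} (h : w i ≠ v i) :
    Fin.take (i + 1) i.isLt w ≠ Fin.take (i + 1) i.isLt v := fun he =>
  h (congrFun he (Fin.last i))

theorem hammingDist_treeCode (w v : Fin L → Fin m) :
    hammingDist (treeCode w) (treeCode v) =
      2 * ∑ j ∈ ({j : Fin L | Fin.take (j + 1) j.isLt w ≠ Fin.take (j + 1) j.isLt v} : Finset _),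
        2 ^ (j.rev : ℕ) := by
  rw [hammingDist_sigma, sum_filter, mul_sum]
  refine sum_congr rfl fun j _ => ?_
  change hammingDist ((fun a => decide (Fin.take (j + 1) j.isLt w = a)) ∘ Prod.snd :
      Fin (2 ^ (j.rev : ℕ)) × (Fin (j + 1) → Fin m) → Bool)
    ((fun a => decide (Fin.take (j + 1) j.isLt v = a)) ∘ Prod.snd) = _
  rw [hammingDist_comp_snd, hammingDist_decide_eq_decide_eq, Fintype.card_fin]
  split_ifs <;> simp_all [mul_comm]

theorem hammingDist_treeCode_false (w : Fin L → Fin m) :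
    hammingDist (treeCode w) (fun _ => false) = 2 ^ L - 1 := by
  rw [hammingDist_sigma]
  calc ∑ j : Fin L, hammingDist (fun b => treeCode w ⟨j, b⟩) (fun _ => false)
      = ∑ j : Fin L, 2 ^ (j.rev : ℕ) := by
        refine sum_congr rfl fun j _ => ?_
        change hammingDist ((fun a => decide (Fin.take (j + 1) j.isLt w = a)) ∘ Prod.snd :
            Fin (2 ^ (j.rev : ℕ)) × (Fin (j + 1) → Fin m) → Bool)
          ((fun _ => false) ∘ Prod.snd) = _
        rw [hammingDist_comp_snd, hammingDist_decide_eq_false, Fintype.card_fin, mul_one]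
    _ = ∑ j : Fin L, 2 ^ (j : ℕ) := Fintype.sum_equiv Fin.revPerm _ _ fun _ => by simp
    _ = 2 ^ L - 1 := by
        rw [Fin.sum_univ_eq_sum_range (2 ^ ·), Nat.geomSum_eq le_rfl, Nat.div_one]

theorem hammingDist_treeCode_lt {w v : Fin L → Fin m} {s : ℕ}
    (h : ∀ k : Fin L, (k : ℕ) < s → w k = v k) :
    hammingDist (treeCode w) (treeCode v) < 2 * 2 ^ (L - s) := by
  rw [hammingDist_treeCode, ← sum_image (g := fun j : Fin L => (j.rev : ℕ))
    ((Fin.val_injective.comp Fin.rev_injective).injOn)]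
  refine Nat.mul_lt_mul_of_pos_left (Nat.geomSum_lt le_rfl ?_) two_pos
  simp only [mem_image, mem_filter, mem_univ, true_and]
  rintro _ ⟨j, hj, rfl⟩
  have : s ≤ (j : ℕ) := by
    by_contra! hjs
    exact hj (Fin.take_eq_take_of_lt h hjs)
  rw [Fin.val_rev]
  omega

theorem two_pow_le_hammingDist_treeCode {w v : Fin L → Fin m} {i : Fin L} (h : w i ≠ v i) :
    2 * 2 ^ (i.rev : ℕ) ≤ hammingDist (treeCode w) (treeCode v) := by
  rw [hammingDist_treeCode]
  exact Nat.mul_le_mul_left 2 (single_le_sum (f := fun j : Fin L => 2 ^ (j.rev : ℕ))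
    (fun _ _ => Nat.zero_le _) (mem_filter.2 ⟨mem_univ i, Fin.take_ne_take_of_ne h⟩))

end TreeCode

section TreeCodeFin

variable {L m : ℕ}

noncomputable def treeCodeFin (w : Fin L → Fin m) : Fin (Fintype.card (TreeCoord L m)) → Bool :=
  treeCode w ∘ (Fintype.equivFin _).symm

theorem hammingDist_treeCodeFin (w v : Fin L → Fin m) :
    hammingDist (treeCodeFin w) (treeCodeFin v) = hammingDist (treeCode w) (treeCode v) :=
  hammingDist_comp_equiv _ _ _

theorem wt_treeCodeFin (w : Fin L → Fin m) : wt (treeCodeFin w) = 2 ^ L - 1 := by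
  rw [wt_eq_hammingDist, ← hammingDist_treeCode_false w]
  exact hammingDist_comp_equiv (Fintype.equivFin (TreeCoord L m)).symm (treeCode w) fun _ => false

theorem treeCodeFin_injective : Function.Injective (treeCodeFin : (Fin L → Fin m) → _) := by
  intro w v h
  by_contra hne
  obtain ⟨i, hi⟩ := Function.ne_iff.mp hne
  have hdist := two_pow_le_hammingDist_treeCode hi
  rw [← hammingDist_treeCodeFin, h, hammingDist_self] at hdist
  exact hdist.not_gt (by positivity)

theorem lt_dr_image_treeCodeFin {C : ℝ} {t : ℕ} (hC : 0 < C) (hCt : 2 * C ≤ 2 ^ t) (hm : 0 < m)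
    {T : Finset (Fin L → Fin m)} (hT : m ^ t < #T) : C < dr (T.image treeCodeFin) := by
  classical
  obtain ⟨i, ⟨u, hu, v, hv, huv⟩, u', hu', v', hv', hne, hagree⟩ :=
    exists_far_pair_and_close_pair hm hT
  have hiL : i + t ≤ L := by
    by_contra! h
    exact hne (funext fun k => hagree k (by omega))
  have hfar := two_pow_le_hammingDist_treeCode huv
  have hclose := hammingDist_treeCode_lt hagree
  refine lt_dr_of_mul_hammingDist_lt hC.le (mem_image_of_mem _ hu) (mem_image_of_mem _ hv)
    (mem_image_of_mem _ hu') (mem_image_of_mem _ hv') (treeCodeFin_injective.ne hne) ?_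
  rw [hammingDist_treeCodeFin, hammingDist_treeCodeFin]
  have hexp : (2 : ℝ) ^ t * 2 ^ (L - (i + t)) = 2 * 2 ^ (i.rev : ℕ) := by
    rw [← pow_add, ← pow_succ', Fin.val_rev]
    congr 1
    omega
  calc C * hammingDist (treeCode u') (treeCode v') < C * (2 * 2 ^ (L - (i + t))) := by
        gcongr
        exact_mod_cast hclose
    _ = 2 * C * 2 ^ (L - (i + t)) := by ring
    _ ≤ 2 ^ t * 2 ^ (L - (i + t)) := by gcongr
    _ = 2 * 2 ^ (i.rev : ℕ) := hexp
    _ ≤ hammingDist (treeCode u) (treeCode v) := by exact_mod_cast hfar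

end TreeCodeFin

theorem stmt_10 (α C lam : ℝ) (hα : 0 < α) (hC : 1 ≤ C) (hlam : 1 < lam) :
    ∃ p n : ℕ, 0 < p ∧ 0 < n ∧
      ∃ K : Finset (Fin n → Bool),
        lam ^ p ≤ (K.card : ℝ) ∧
        (∀ v ∈ K, wt v = p) ∧
        ∀ K' ⊆ K, (K.card : ℝ) ^ α ≤ (K'.card : ℝ) → C < dr K' := by
  obtain ⟨t, ht⟩ := pow_unbounded_of_one_lt (2 * C) one_lt_two
  obtain ⟨L, hL⟩ := exists_nat_gt (t / α)
  have hL0 : 0 < L := by exact_mod_cast (div_nonneg t.cast_nonneg hα.le).trans_lt hL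
  set p := 2 ^ L - 1
  have hp : 0 < p := Nat.sub_pos_of_lt (Nat.one_lt_two_pow hL0.ne')
  set m := ⌈lam ^ p⌉₊
  have hm : 1 < m := Nat.lt_ceil.2 (by exact_mod_cast one_lt_pow₀ hlam hp.ne')
  set K := univ.image (treeCodeFin (L := L) (m := m))
  have hcardK : #K = m ^ L := by
    rw [card_image_of_injective _ treeCodeFin_injective, card_univ, Fintype.card_fun,
      Fintype.card_fin, Fintype.card_fin]
  refine ⟨p, _, hp, Fintype.card_pos_iff.2 ⟨⟨⟨0, hL0⟩, ⟨0, by positivity⟩, fun _ => ⟨0, by omega⟩⟩⟩,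
    K, ?_, ?_, ?_⟩
  · rw [hcardK]
    exact (Nat.le_ceil _).trans (by exact_mod_cast Nat.le_self_pow hL0.ne' m)
  · rintro v hv
    obtain ⟨w, -, rfl⟩ := mem_image.1 hv
    exact wt_treeCodeFin w
  · intro K' hK' hcard
    obtain ⟨T, -, rfl⟩ := subset_image_iff.1 hK'
    refine lt_dr_image_treeCodeFin (by linarith) ht.le (by omega) ?_
    have hpow : (m : ℝ) ^ t < ((m ^ L : ℕ) : ℝ) ^ α := by
      rw [Nat.cast_pow, ← Real.rpow_natCast, ← Real.rpow_natCast, ← Real.rpow_mul (by positivity)]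
      exact Real.rpow_lt_rpow_of_exponent_lt (by exact_mod_cast hm) (by rwa [div_lt_iff₀ hα] at hL)
    rw [hcardK, card_image_of_injective _ treeCodeFin_injective] at hcard
    exact_mod_cast hpow.trans_le hcard
end
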